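/- arXiv:1906.09729 — 2 statements merged into one kernel-verified Lean document; each statement's English description precedes it below -/
import Mathlib

section
/- Let L be an integrable real random variable on a probability space (Ω,𝓕,P), let 0 < a < 1 and 0 < b ≤ 1. Then the shortfall risk satisfies inf{ m ∈ ℝ : E[ℓ_{a,b}(L−m)] ≤ 0 } = sup{ R_{a/γ, bγ}(L) : a ≤ γ ≤ 1/b } = sup{ E[Z·L] : Z is a random variable with E[Z] = 1 and bγ ≤ Z ≤ γ/a almost surely for some γ ∈ [a, 1/b] }. -/
open MeasureTheory Filter Topology Real Set
open scoped ENNReal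

/-- Left-quantile function: `q_L(u) = inf {m : P[L ≤ m] ≥ u}`. -/
noncomputable def leftQuantile {Ω : Type*} [MeasurableSpace Ω] (P : Measure Ω)
    (L : Ω → ℝ) (u : ℝ) : ℝ :=
  sInf {m : ℝ | u ≤ (P {ω | L ω ≤ m}).toReal}

/-- Expected shortfall: `ES_α(L) = (1/(1-α)) ∫_α^1 q_L(u) du`. -/
noncomputable def ES {Ω : Type*} [MeasurableSpace Ω] (P : Measure Ω)
    (L : Ω → ℝ) (α : ℝ) : ℝ :=
  (1 - α)⁻¹ * ∫ u in α..1, leftQuantile P L u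

/-- The α-expectile is the (unique) `e` with `α E[(L-e)⁺] = (1-α) E[(L-e)⁻]`. -/
def IsExpectile {Ω : Type*} [MeasurableSpace Ω] (P : Measure Ω)
    (L : Ω → ℝ) (α e : ℝ) : Prop :=
  α * ∫ ω, max (L ω - e) 0 ∂P = (1 - α) * ∫ ω, max (e - L ω) 0 ∂P

/-- Loss function `ℓ_{a,b}(x) = x⁺/a - b x⁻`. -/
noncomputable def lossFn (a b x : ℝ) : ℝ := max x 0 / a - b * max (-x) 0

/-- Optimized certainty equivalent `R_{a,b}(L) = inf { m + E[ℓ_{a,b}(L-m)] }`. -/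
noncomputable def OCE {Ω : Type*} [MeasurableSpace Ω] (P : Measure Ω)
    (L : Ω → ℝ) (a b : ℝ) : ℝ :=
  sInf {r : ℝ | ∃ m : ℝ, r = m + ∫ ω, lossFn a b (L ω - m) ∂P}

/-- `g` is regularly varying at infinity with index `ρ`. -/
def RegularlyVarying (g : ℝ → ℝ) (ρ : ℝ) : Prop :=
  ∀ x : ℝ, 0 < x → Tendsto (fun t => g (t * x) / g t) atTop (𝓝 (x ^ ρ))

/-- `g` is of second-order regular variation with indices `-η`, `ρ` and auxiliary function `A`. -/
def SecondOrderRV (g : ℝ → ℝ) (η ρ : ℝ) (A : ℝ → ℝ) : Prop :=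
  RegularlyVarying g (-η) ∧
  Tendsto A atTop (𝓝 0) ∧
  ((∀ᶠ t in atTop, 0 < A t) ∨ (∀ᶠ t in atTop, A t < 0)) ∧
  ∀ x : ℝ, 0 < x →
    Tendsto (fun t => (g (t * x) / g t - x ^ (-η)) / A t) atTop
      (𝓝 (if ρ = 0 then x ^ (-η) * Real.log x else x ^ (-η) * (x ^ ρ - 1) / ρ))

/-- Empirical measure `(1/n) ∑_{k<n} δ_{L_k(ω)}` of the first `n` samples. -/
noncomputable def empMeasure {Ω : Type*} [MeasurableSpace Ω] (L : ℕ → Ω → ℝ)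
    (n : ℕ) (ω : Ω) : Measure ℝ :=
  (n : ℝ≥0∞)⁻¹ • ∑ k ∈ Finset.range n, Measure.dirac (L k ω)

/-!
Write `F m = E[ℓ_{a,b}(L - m)]`. Since the slopes of `ℓ_{a,b}` lie in `[b, 1/a]`, `F` is
continuous and `F m + b m` is antitone, so the shortfall risk `s` is the zero of `F`.
A density `Z` with `bγ ≤ Z ≤ γ/a` satisfies `Z x ≤ γ ℓ_{a,b}(x) = ℓ_{a/γ,bγ}(x)`, hence
`E[Z L] ≤ m + γ F m` for every `m`: this gives `E[Z L] ≤ R_{a/γ,bγ}(L)`, and `m = s` gives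
`R_{a/γ,bγ}(L) ≤ s`. Both bounds are attained by normalising the slope of `ℓ_{a,b}` at `L - s`
to a density, with `γ` the normalising constant.
-/

section LossFn

variable {a b x : ℝ}

lemma lossFn_eq (a b x : ℝ) : lossFn a b x = b * x + (a⁻¹ - b) * max x 0 := by
  rw [lossFn, div_eq_mul_inv]
  linear_combination b * max_zero_sub_max_neg_zero_eq_self x

lemma lossFn_div_mul (γ : ℝ) : lossFn (a / γ) (b * γ) x = γ * lossFn a b x := by
  simp only [lossFn, div_div_eq_mul_div]
  ring

lemma abs_lossFn_sub_le (hb : 0 ≤ b) (hab : b ≤ a⁻¹) (x y : ℝ) :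
    |lossFn a b x - lossFn a b y| ≤ a⁻¹ * |x - y| := by
  have hmax := abs_max_sub_max_le_abs x y 0
  calc |lossFn a b x - lossFn a b y|
      = |b * (x - y) + (a⁻¹ - b) * (max x 0 - max y 0)| := by
        rw [lossFn_eq, lossFn_eq]; ring_nf
    _ ≤ b * |x - y| + (a⁻¹ - b) * |max x 0 - max y 0| := by
        refine (abs_add_le _ _).trans ?_
        rw [abs_mul, abs_mul, abs_of_nonneg hb, abs_of_nonneg (sub_nonneg.2 hab)]
    _ ≤ a⁻¹ * |x - y| := by nlinarith [sub_nonneg.2 hab]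

lemma antitone_lossFn_sub_add_mul (hab : b ≤ a⁻¹) (x : ℝ) :
    Antitone fun m => lossFn a b (x - m) + b * m := by
  intro m m' hm
  simp only [lossFn_eq]
  nlinarith [max_le_max (sub_le_sub_left hm x) (le_refl (0 : ℝ)), sub_nonneg.2 hab]

lemma mul_le_lossFn {z : ℝ} (hz : z ∈ Icc b a⁻¹) (x : ℝ) : z * x ≤ lossFn a b x := by
  rw [lossFn_eq]
  rcases le_total 0 x with hx | hx
  · rw [max_eq_left hx]; nlinarith [hz.2]
  · rw [max_eq_right hx]; nlinarith [hz.1]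

noncomputable def lossSlope (a b x : ℝ) : ℝ := if 0 < x then a⁻¹ else b

lemma lossSlope_mul_self (a b x : ℝ) : lossSlope a b x * x = lossFn a b x := by
  rw [lossSlope, lossFn_eq]
  split_ifs with hx
  · rw [max_eq_left hx.le]; ring
  · rw [max_eq_right (not_lt.1 hx)]; ring

lemma lossSlope_mem_Icc (hab : b ≤ a⁻¹) (x : ℝ) : lossSlope a b x ∈ Icc b a⁻¹ := by
  unfold lossSlope
  split_ifs
  · exact ⟨hab, le_rfl⟩
  · exact ⟨le_rfl, hab⟩

lemma measurable_lossSlope (a b : ℝ) : Measurable (lossSlope a b) :=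
  Measurable.ite measurableSet_Ioi measurable_const measurable_const

end LossFn

lemma apply_sInf_setOf_nonpos_eq_zero {f : ℝ → ℝ} {b : ℝ} (hf : Continuous f) (hb : 0 < b)
    (hanti : Antitone fun m => f m + b * m) : f (sInf {m | f m ≤ 0}) = 0 := by
  set S := {m | f m ≤ 0}
  have hne : S.Nonempty := by
    refine ⟨max 0 (f 0 / b), ?_⟩
    have h := hanti (le_max_left 0 (f 0 / b))
    have h' := mul_le_mul_of_nonneg_left (le_max_right 0 (f 0 / b)) hb.le
    rw [mul_div_cancel₀ _ hb.ne'] at h'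
    simp only [mul_zero, add_zero] at h
    show f _ ≤ 0
    linarith
  have hbdd : BddBelow S := by
    refine ⟨min 0 (f 0 / b), fun m hm => le_of_not_gt fun hlt => ?_⟩
    have h := hanti (hlt.le.trans (min_le_left 0 _))
    have h' := mul_lt_mul_of_pos_left (hlt.trans_le (min_le_right 0 (f 0 / b))) hb
    rw [mul_div_cancel₀ _ hb.ne'] at h'
    simp only [mul_zero, add_zero] at h
    have hm : f m ≤ 0 := hm
    linarith
  refine le_antisymm ((isClosed_le hf continuous_const).csInf_mem hne hbdd)
    (not_lt.1 fun hneg => ?_)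
  -- `f < 0` near the infimum, hence also slightly to its left, inside `S`
  obtain ⟨m, hm, hms⟩ := (((hf.tendsto _).eventually (gt_mem_nhds hneg)).filter_mono
    nhdsWithin_le_nhds).and self_mem_nhdsWithin |>.exists (f := 𝓝[<] sInf S)
  exact (not_le.2 hms) (csInf_le hbdd (le_of_lt hm))

section Integral

variable {Ω : Type*} [MeasurableSpace Ω] {P : Measure Ω} {L : Ω → ℝ} {a b : ℝ}

lemma MeasureTheory.Integrable.lossFn_sub [IsFiniteMeasure P] (hL : Integrable L P)
    (a b m : ℝ) : Integrable (fun ω => lossFn a b (L ω - m)) P := by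
  simp only [lossFn_eq]
  exact ((hL.sub (integrable_const m)).const_mul b).add
    ((hL.sub (integrable_const m)).pos_part.const_mul _)

lemma continuous_integral_lossFn_sub [IsProbabilityMeasure P] (hL : Integrable L P)
    (hb : 0 ≤ b) (hab : b ≤ a⁻¹) : Continuous fun m => ∫ ω, lossFn a b (L ω - m) ∂P := by
  refine (LipschitzWith.of_dist_le' (K := a⁻¹) fun m m' => ?_).continuous
  have hpt : ∀ ω, ‖lossFn a b (L ω - m) - lossFn a b (L ω - m')‖ ≤ a⁻¹ * |m - m'| := by
    intro ω
    simpa [abs_sub_comm m] using abs_lossFn_sub_le hb hab (L ω - m) (L ω - m')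
  rw [Real.dist_eq, Real.dist_eq, ← integral_sub (hL.lossFn_sub a b m) (hL.lossFn_sub a b m')]
  simpa using norm_integral_le_of_norm_le_const (μ := P) (Eventually.of_forall hpt)

lemma antitone_integral_lossFn_sub_add_mul [IsProbabilityMeasure P] (hL : Integrable L P)
    (hab : b ≤ a⁻¹) : Antitone fun m => ∫ ω, lossFn a b (L ω - m) ∂P + b * m := by
  intro m m' hm
  have h : ∫ ω, (lossFn a b (L ω - m') + b * m') ∂P ≤ ∫ ω, (lossFn a b (L ω - m) + b * m) ∂P :=
    integral_mono ((hL.lossFn_sub a b m').add (integrable_const _))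
      ((hL.lossFn_sub a b m).add (integrable_const _))
      fun ω => antitone_lossFn_sub_add_mul hab (L ω) hm
  simpa [integral_add (hL.lossFn_sub a b _) (integrable_const _)] using h

end Integral

section Duality

variable {Ω : Type*} [MeasurableSpace Ω] {P : Measure Ω} [IsProbabilityMeasure P]
  {L Z : Ω → ℝ} {a b : ℝ}

noncomputable def shortfallRisk (P : Measure Ω) (L : Ω → ℝ) (a b : ℝ) : ℝ :=
  sInf {m : ℝ | ∫ ω, lossFn a b (L ω - m) ∂P ≤ 0}

lemma integral_lossFn_sub_shortfallRisk (hL : Integrable L P) (hb : 0 < b) (hab : b ≤ a⁻¹) :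
    ∫ ω, lossFn a b (L ω - shortfallRisk P L a b) ∂P = 0 :=
  apply_sInf_setOf_nonpos_eq_zero (continuous_integral_lossFn_sub hL hb.le hab) hb
    (antitone_integral_lossFn_sub_add_mul hL hab)

lemma integral_mul_sub_const (hL : Integrable L P) (hZ : AEStronglyMeasurable Z P)
    {l u : ℝ} (hZb : ∀ᵐ ω ∂P, Z ω ∈ Icc l u) (m : ℝ) :
    ∫ ω, Z ω * (L ω - m) ∂P = ∫ ω, Z ω * L ω ∂P - m * ∫ ω, Z ω ∂P := by
  have hZL : Integrable (fun ω => Z ω * L ω) P := hL.mul_of_top_right (memLp_of_bounded hZb hZ ⊤)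
  have hZint : Integrable Z P := (memLp_of_bounded hZb hZ 1).integrable le_rfl
  simp_rw [mul_sub]
  rw [integral_sub hZL (hZint.mul_const m), integral_mul_const, mul_comm]

lemma integral_mul_le_add_integral_lossFn (hL : Integrable L P) (hZ : AEStronglyMeasurable Z P)
    (hZ1 : ∫ ω, Z ω ∂P = 1) (hZb : ∀ᵐ ω ∂P, Z ω ∈ Icc b a⁻¹) (m : ℝ) :
    ∫ ω, Z ω * L ω ∂P ≤ m + ∫ ω, lossFn a b (L ω - m) ∂P := by
  have hZL : Integrable (fun ω => Z ω * (L ω - m)) P :=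
    (hL.sub (integrable_const m)).mul_of_top_right (memLp_of_bounded hZb hZ ⊤)
  have h := integral_mono_ae hZL (hL.lossFn_sub a b m)
    (hZb.mono fun ω hω => mul_le_lossFn hω (L ω - m))
  rw [integral_mul_sub_const hL hZ hZb, hZ1] at h
  linarith

lemma integral_mul_le_OCE (hL : Integrable L P) (hZ : AEStronglyMeasurable Z P)
    (hZ1 : ∫ ω, Z ω ∂P = 1) (hZb : ∀ᵐ ω ∂P, Z ω ∈ Icc b a⁻¹) :
    ∫ ω, Z ω * L ω ∂P ≤ OCE P L a b :=
  le_csInf ⟨_, 0, rfl⟩ fun _ ⟨m, hm⟩ => hm ▸ integral_mul_le_add_integral_lossFn hL hZ hZ1 hZb m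

lemma OCE_le_add_integral_lossFn (hL : Integrable L P) (hb1 : b ≤ 1) (ha1 : 1 ≤ a⁻¹) (m : ℝ) :
    OCE P L a b ≤ m + ∫ ω, lossFn a b (L ω - m) ∂P := by
  -- the density `Z = 1` bounds every candidate value of the infimum from below
  have hbdd : ∀ m, ∫ ω, L ω ∂P ≤ m + ∫ ω, lossFn a b (L ω - m) ∂P := by
    simpa using integral_mul_le_add_integral_lossFn (Z := 1) hL aestronglyMeasurable_const
      (by simp) (Eventually.of_forall fun _ => ⟨hb1, ha1⟩)
  exact csInf_le ⟨_, fun _ ⟨m, hm⟩ => hm ▸ hbdd m⟩ ⟨m, rfl⟩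

lemma exists_density_integral_mul_eq (hL : Integrable L P) (ha : 0 < a) (hb : 0 < b)
    (hab : b ≤ a⁻¹) {s : ℝ} (hs : ∫ ω, lossFn a b (L ω - s) ∂P = 0) :
    ∃ Z : Ω → ℝ, ∃ γ : ℝ, a ≤ γ ∧ γ ≤ 1 / b ∧ Measurable Z ∧ ∫ ω, Z ω ∂P = 1 ∧
      (∀ ω, b * γ ≤ Z ω ∧ Z ω ≤ γ / a) ∧ s = ∫ ω, Z ω * L ω ∂P := by
  obtain ⟨L', hL', hLL'⟩ := hL.aestronglyMeasurable
  set w : Ω → ℝ := fun ω => lossSlope a b (L' ω - s)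
  have hw : Measurable w := (measurable_lossSlope a b).comp (hL'.measurable.sub_const s)
  have hwb : ∀ ω, w ω ∈ Icc b a⁻¹ := fun ω => lossSlope_mem_Icc hab _
  have hwint : Integrable w P :=
    (memLp_of_bounded (Eventually.of_forall hwb) hw.aestronglyMeasurable 1).integrable le_rfl
  set c := ∫ ω, w ω ∂P
  have hbc : b ≤ c := by
    simpa using integral_mono (integrable_const b) hwint fun ω => (hwb ω).1
  have hca : c ≤ a⁻¹ := by
    simpa using integral_mono hwint (integrable_const a⁻¹) fun ω => (hwb ω).2
  have hc : 0 < c := hb.trans_le hbc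
  -- `w` is a subgradient of the loss at `L - s`, normalised below to a density
  have hwL : ∫ ω, w ω * (L ω - s) ∂P = 0 := by
    rw [← hs]
    refine integral_congr_ae (hLL'.mono fun ω hω => ?_)
    simp only [w, hω, lossSlope_mul_self]
  set Z : Ω → ℝ := fun ω => c⁻¹ * w ω
  have hZb : ∀ ω, Z ω ∈ Icc (b * c⁻¹) (c⁻¹ / a) := fun ω =>
    ⟨by simpa [Z, mul_comm] using mul_le_mul_of_nonneg_left (hwb ω).1 (inv_pos.2 hc).le,
     by simpa [Z, div_eq_mul_inv] using mul_le_mul_of_nonneg_left (hwb ω).2 (inv_pos.2 hc).le⟩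
  have hZ : Measurable Z := measurable_const.mul hw
  have hZ1 : ∫ ω, Z ω ∂P = 1 := by
    rw [integral_const_mul, inv_mul_cancel₀ hc.ne']
  refine ⟨Z, c⁻¹, (le_inv_comm₀ ha hc).2 hca, one_div b ▸ inv_anti₀ hb hbc, hZ, hZ1, hZb, ?_⟩
  have h := integral_mul_sub_const hL hZ.aestronglyMeasurable (Eventually.of_forall hZb) s
  have hZL : ∫ ω, Z ω * (L ω - s) ∂P = 0 := by
    simp only [Z, mul_assoc, integral_const_mul, hwL, mul_zero]
  rw [hZL, hZ1] at h
  linarith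

end Duality

/-- the shortfall risk `inf {m : E[ℓ_{a,b}(L-m)] ≤ 0}` equals
`sup_{a ≤ γ ≤ 1/b} R_{a/γ, bγ}(L)` and also equals the corresponding dual supremum. -/
theorem shortfallRisk_eq_sup_oce {Ω : Type*} [MeasurableSpace Ω] (P : Measure Ω)
    [IsProbabilityMeasure P] (L : Ω → ℝ) (hL : Integrable L P)
    (a b : ℝ) (ha : 0 < a) (ha1 : a < 1) (hb : 0 < b) (hb1 : b ≤ 1) :
    sInf {m : ℝ | ∫ ω, lossFn a b (L ω - m) ∂P ≤ 0} =
      sSup {r : ℝ | ∃ γ : ℝ, a ≤ γ ∧ γ ≤ 1 / b ∧ r = OCE P L (a / γ) (b * γ)} ∧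
    sInf {m : ℝ | ∫ ω, lossFn a b (L ω - m) ∂P ≤ 0} =
      sSup {r : ℝ | ∃ Z : Ω → ℝ, ∃ γ : ℝ, a ≤ γ ∧ γ ≤ 1 / b ∧ Measurable Z ∧
        (∫ ω, Z ω ∂P) = 1 ∧ (∀ᵐ ω ∂P, b * γ ≤ Z ω ∧ Z ω ≤ γ / a) ∧
        r = ∫ ω, Z ω * L ω ∂P} := by
  have hab : b ≤ a⁻¹ := le_trans hb1 (one_le_inv₀ ha |>.2 ha1.le)
  change shortfallRisk P L a b = _ ∧ shortfallRisk P L a b = _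
  have hs := integral_lossFn_sub_shortfallRisk hL hb hab
  have hOCE_le {γ} (hγa : a ≤ γ) (hγb : γ ≤ 1 / b) :
      OCE P L (a / γ) (b * γ) ≤ shortfallRisk P L a b := by
    have h := OCE_le_add_integral_lossFn hL (a := a / γ) (b := b * γ)
      ((le_div_iff₀' hb).1 hγb) (by rwa [inv_div, one_le_div ha]) (shortfallRisk P L a b)
    simpa only [lossFn_div_mul, integral_const_mul, hs, mul_zero, add_zero] using h
  have hle_OCE {Z : Ω → ℝ} {γ} (hZ : Measurable Z) (hZ1 : ∫ ω, Z ω ∂P = 1)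
      (hZb : ∀ᵐ ω ∂P, b * γ ≤ Z ω ∧ Z ω ≤ γ / a) :
      ∫ ω, Z ω * L ω ∂P ≤ OCE P L (a / γ) (b * γ) :=
    integral_mul_le_OCE hL hZ.aestronglyMeasurable hZ1 (by rwa [inv_div])
  obtain ⟨Z₀, γ₀, hγ₀a, hγ₀b, hZ₀, hZ₀1, hZ₀b, hZ₀L⟩ :=
    exists_density_integral_mul_eq hL ha hb hab hs
  have hOCE₀ : shortfallRisk P L a b = OCE P L (a / γ₀) (b * γ₀) :=
    le_antisymm (hZ₀L.trans_le (hle_OCE hZ₀ hZ₀1 (.of_forall hZ₀b))) (hOCE_le hγ₀a hγ₀b)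
  refine ⟨(IsGreatest.csSup_eq ⟨?_, ?_⟩).symm, (IsGreatest.csSup_eq ⟨?_, ?_⟩).symm⟩
  · exact ⟨γ₀, hγ₀a, hγ₀b, hOCE₀⟩
  · rintro _ ⟨γ, hγa, hγb, rfl⟩
    exact hOCE_le hγa hγb
  · exact ⟨Z₀, γ₀, hγ₀a, hγ₀b, hZ₀, hZ₀1, .of_forall hZ₀b, hZ₀L⟩
  · rintro _ ⟨Z, γ, hγa, hγb, hZ, hZ1, hZb, rfl⟩
    exact (hle_OCE hZ hZ1 hZb).trans (hOCE_le hγa hγb)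
end

section
/- Let L be an integrable real random variable on a probability space (Ω,𝓕,P) that is not almost surely constant, and let 1/2 ≤ α < 1. Then every β* in the interval [P[L < e_α(L)], P[L ≤ e_α(L)]] satisfies 0 < β* < 1, and for every such β* it holds that e_α(L) = (1 − (1−α)/(α + (1−2α)β*))·ES_{β*}(L) + ((1−α)/(α + (1−2α)β*))·E[L]. -/
open MeasureTheory Filter Topology Real Set
open scoped ENNReal

/-! Write `S₊ = E[(L - e)⁺]` and `S₋ = E[(e - L)⁺]`, so that `α S₊ = (1 - α) S₋` and
`E[L] = e + S₊ - S₋`. The quantile function `q_L` pushes Lebesgue measure on `(0, 1)` forward to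
the law of `L`, and `q_L ≥ e` on `(β, 1)` while `q_L ≤ e` on `(0, β]`; hence
`(1 - β) ES_β(L) = ∫_β^1 q_L = S₊ + (1 - β) e`, and the identity is linear algebra in `S₊, S₋`.
If `P[L < e] = 0` then `S₋ = 0`, so `S₊ = 0` and `L = e` a.s.; symmetrically `P[L ≤ e] < 1`. -/

open ProbabilityTheory

section Quantile

variable {Ω : Type*} [MeasurableSpace Ω] {P : Measure Ω} [IsProbabilityMeasure P] {L : Ω → ℝ}

lemma cdf_map_eq_toReal (hL : AEMeasurable L P) (m : ℝ) :
    cdf (P.map L) m = (P {ω | L ω ≤ m}).toReal := by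
  have := Measure.isProbabilityMeasure_map (μ := P) hL
  rw [cdf_eq_real, measureReal_def, Measure.map_apply_of_aemeasurable hL measurableSet_Iic]
  rfl

lemma leftQuantile_le_iff (hL : AEMeasurable L P) {u t : ℝ} (hu0 : 0 < u) (hu1 : u < 1) :
    leftQuantile P L u ≤ t ↔ u ≤ (P {ω | L ω ≤ t}).toReal := by
  have := Measure.isProbabilityMeasure_map (μ := P) hL
  set F := cdf (P.map L)
  have hF (m : ℝ) : (P {ω | L ω ≤ m}).toReal = F m := (cdf_map_eq_toReal hL m).symm
  simp_rw [leftQuantile, hF]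
  have hne : {m | u ≤ F m}.Nonempty :=
    (((tendsto_cdf_atTop _).eventually (eventually_gt_nhds hu1)).exists).imp fun _ h => h.le
  constructor
  · intro h
    refine ge_of_tendsto ((F.right_continuous t).mono Ioi_subset_Ici_self) ?_
    filter_upwards [self_mem_nhdsWithin] with x (hx : t < x)
    obtain ⟨m, hm, hmx⟩ := exists_lt_of_csInf_lt hne (h.trans_lt hx)
    exact hm.trans (F.mono hmx.le)
  · intro h
    obtain ⟨m₀, hm₀⟩ := ((tendsto_cdf_atBot _).eventually (eventually_lt_nhds hu0)).exists
    refine csInf_le ⟨m₀, fun m hm => ?_⟩ h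
    by_contra! hlt
    exact (hm.trans (F.mono hlt.le)).not_gt hm₀

lemma monotoneOn_leftQuantile (hL : AEMeasurable L P) : MonotoneOn (leftQuantile P L) (Ioo 0 1) :=
  fun _ hu _ hv huv => (leftQuantile_le_iff hL hu.1 hu.2).2 <|
    huv.trans ((leftQuantile_le_iff hL hv.1 hv.2).1 le_rfl)

lemma aemeasurable_leftQuantile (hL : AEMeasurable L P) :
    AEMeasurable (leftQuantile P L) (volume.restrict (Ioo 0 1)) :=
  aemeasurable_restrict_of_monotoneOn measurableSet_Ioo (monotoneOn_leftQuantile hL)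

lemma volume_Iic_inter_Ioo_zero_one {c : ℝ} (hc1 : c ≤ 1) :
    volume (Iic c ∩ Ioo 0 1) = ENNReal.ofReal c := by
  refine le_antisymm ?_ ?_
  · calc volume (Iic c ∩ Ioo 0 1) ≤ volume (Icc 0 c) :=
          measure_mono fun x hx => ⟨hx.2.1.le, hx.1⟩
      _ = ENNReal.ofReal c := by rw [Real.volume_Icc, sub_zero]
  · calc ENNReal.ofReal c = volume (Ioo 0 c) := by rw [Real.volume_Ioo, sub_zero]
      _ ≤ volume (Iic c ∩ Ioo 0 1) :=
          measure_mono fun x hx => ⟨hx.2.le, hx.1, hx.2.trans_le hc1⟩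

theorem map_leftQuantile (hL : AEMeasurable L P) :
    (volume.restrict (Ioo 0 1)).map (leftQuantile P L) = P.map L := by
  refine Measure.ext_of_Iic _ _ fun t => ?_
  have hpre : leftQuantile P L ⁻¹' Iic t ∩ Ioo 0 1 = Iic (cdf (P.map L) t) ∩ Ioo 0 1 := by
    ext u
    simp only [mem_inter_iff, mem_preimage, mem_Iic, and_congr_left_iff]
    intro hu
    rw [leftQuantile_le_iff hL hu.1 hu.2, cdf_map_eq_toReal hL]
  have := Measure.isProbabilityMeasure_map (μ := P) hL
  rw [Measure.map_apply_of_aemeasurable (aemeasurable_leftQuantile hL) measurableSet_Iic,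
    Measure.restrict_apply' measurableSet_Ioo, hpre,
    volume_Iic_inter_Ioo_zero_one (cdf_le_one _ t), ofReal_cdf]

lemma integral_comp_leftQuantile (hL : AEMeasurable L P) {g : ℝ → ℝ}
    (hg : AEStronglyMeasurable g (P.map L)) :
    ∫ u in Ioo 0 1, g (leftQuantile P L u) = ∫ ω, g (L ω) ∂P := by
  rw [← integral_map (aemeasurable_leftQuantile hL) (by rwa [map_leftQuantile hL]),
    map_leftQuantile hL, integral_map hL hg]

lemma integrableOn_comp_leftQuantile (hL : AEMeasurable L P) {g : ℝ → ℝ}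
    (hg : AEStronglyMeasurable g (P.map L)) (hgL : Integrable (fun ω => g (L ω)) P) :
    IntegrableOn (fun u => g (leftQuantile P L u)) (Ioo 0 1) := by
  refine (integrable_map_measure (by rwa [map_leftQuantile hL])
    (aemeasurable_leftQuantile hL)).1 ?_
  rw [map_leftQuantile hL]
  exact (integrable_map_measure hg hL).2 hgL

lemma le_leftQuantile_of_measure_lt_lt (hL : AEMeasurable L P) {u e : ℝ} (hu1 : u < 1)
    (hu : (P {ω | L ω < e}).toReal < u) : e ≤ leftQuantile P L u := by
  by_contra! hlt
  have hu0 : 0 < u := ENNReal.toReal_nonneg.trans_lt hu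
  have hle := (leftQuantile_le_iff hL hu0 hu1).1 le_rfl
  have hmono : (P {ω | L ω ≤ leftQuantile P L u}).toReal ≤ (P {ω | L ω < e}).toReal :=
    ENNReal.toReal_mono (measure_ne_top _ _) (measure_mono fun ω hω => hlt.trans_le' hω)
  exact (hle.trans hmono).not_gt hu

theorem intervalIntegral_leftQuantile_eq (hL : Integrable L P) {e β : ℝ}
    (hβl : (P {ω | L ω < e}).toReal ≤ β) (hβu : β ≤ (P {ω | L ω ≤ e}).toReal) (hβ1 : β ≤ 1) :
    ∫ u in β..1, leftQuantile P L u = ∫ ω, max (L ω - e) 0 ∂P + (1 - β) * e := by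
  set q := leftQuantile P L
  have hLm := hL.aemeasurable
  have hsub : Ioo β 1 ⊆ Ioo 0 1 := Ioo_subset_Ioo_left (ENNReal.toReal_nonneg.trans hβl)
  have hq_sub : EqOn (fun u => q u - e) (fun u => max (q u - e) 0) (Ioo β 1) := fun u hu =>
    (max_eq_left (sub_nonneg.2
      (le_leftQuantile_of_measure_lt_lt hLm hu.2 (hβl.trans_lt hu.1)))).symm
  have hq_vanish : ∀ u ∈ Ioo 0 1 \ Ioo β 1, max (q u - e) 0 = 0 := fun u hu =>
    max_eq_right (sub_nonpos.2 ((leftQuantile_le_iff hLm hu.1.1 hu.1.2).2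
      ((not_lt.1 fun h => hu.2 ⟨h, hu.1.2⟩).trans hβu)))
  have hint : IntegrableOn (fun u => max (q u - e) 0) (Ioo 0 1) :=
    integrableOn_comp_leftQuantile hLm (g := fun x => max (x - e) 0) (by fun_prop)
      (hL.sub (integrable_const e)).pos_part
  have hq_int : IntegrableOn (fun u => q u - e) (Ioo β 1) :=
    (hint.mono_set hsub).congr_fun hq_sub.symm measurableSet_Ioo
  calc ∫ u in β..1, q u = ∫ u in Ioo β 1, ((q u - e) + e) := by
        rw [intervalIntegral.integral_of_le hβ1, integral_Ioc_eq_integral_Ioo]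
        simp only [sub_add_cancel]
    _ = (∫ u in Ioo β 1, max (q u - e) 0) + (1 - β) * e := by
        rw [integral_add hq_int (integrable_const e), setIntegral_const,
          volume_real_Ioo_of_le hβ1, smul_eq_mul, setIntegral_congr_fun measurableSet_Ioo hq_sub]
    _ = ∫ ω, max (L ω - e) 0 ∂P + (1 - β) * e := by
        rw [← setIntegral_eq_of_subset_of_forall_sdiff_eq_zero measurableSet_Ioo hsub hq_vanish]
        exact congrArg (· + _) (integral_comp_leftQuantile hLm (g := fun x => max (x - e) 0)
          (by fun_prop))

end Quantile

section Expectile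

variable {Ω : Type*} [MeasurableSpace Ω] {P : Measure Ω} {L : Ω → ℝ} {α e : ℝ}

lemma IsExpectile.neg (he : IsExpectile P L α e) :
    IsExpectile P (fun ω => -L ω) (1 - α) (-e) := by
  unfold IsExpectile at he ⊢
  simp_rw [neg_sub_neg, sub_sub_cancel]
  exact he.symm

variable [IsProbabilityMeasure P]

lemma integral_max_sub_sub_integral_max_sub (hL : Integrable L P) (e : ℝ) :
    ∫ ω, max (L ω - e) 0 ∂P - ∫ ω, max (e - L ω) 0 ∂P = ∫ ω, L ω ∂P - e := by
  have hpos : Integrable (fun ω => max (L ω - e) 0) P := (hL.sub (integrable_const e)).pos_part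
  have hneg : Integrable (fun ω => max (e - L ω) 0) P := ((integrable_const e).sub hL).pos_part
  rw [← integral_sub hpos hneg]
  simp_rw [← neg_sub (L _) e, max_zero_sub_max_neg_zero_eq_self]
  rw [integral_sub hL (integrable_const e), integral_const, probReal_univ, one_smul]

lemma IsExpectile.ae_eq_of_ae_le (he : IsExpectile P L α e) (hα1 : α < 1) (hL : Integrable L P)
    (h : ∀ᵐ ω ∂P, L ω ≤ e) : ∀ᵐ ω ∂P, L ω = e := by
  have hpos : ∫ ω, max (L ω - e) 0 ∂P = 0 :=
    integral_eq_zero_of_ae (h.mono fun ω hω => max_eq_right (sub_nonpos.2 hω))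
  have hneg : ∫ ω, max (e - L ω) 0 ∂P = 0 := by
    have := he.symm
    rw [hpos, mul_zero] at this
    exact (mul_eq_zero.1 this).resolve_left (sub_ne_zero.2 hα1.ne')
  have hneg_ae := (integral_eq_zero_iff_of_nonneg (fun ω => le_max_right (e - L ω) 0)
    ((integrable_const e).sub hL).pos_part).1 hneg
  filter_upwards [h, hneg_ae] with ω hle hω
  exact le_antisymm hle (sub_nonpos.1 (max_eq_right_iff.1 hω))

lemma IsExpectile.ae_eq_of_ae_ge (he : IsExpectile P L α e) (hα0 : 0 < α) (hL : Integrable L P)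
    (h : ∀ᵐ ω ∂P, e ≤ L ω) : ∀ᵐ ω ∂P, L ω = e :=
  (he.neg.ae_eq_of_ae_le (by linarith) hL.neg (h.mono fun _ => neg_le_neg)).mono
    fun _ => neg_inj.1

lemma IsExpectile.toReal_measure_lt_pos (he : IsExpectile P L α e) (hα0 : 0 < α)
    (hL : Integrable L P) (hnc : ¬ ∃ c : ℝ, ∀ᵐ ω ∂P, L ω = c) :
    0 < (P {ω | L ω < e}).toReal := by
  refine ENNReal.toReal_pos (fun h0 => hnc ⟨e, he.ae_eq_of_ae_ge hα0 hL ?_⟩) (measure_ne_top _ _)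
  exact (measure_eq_zero_iff_ae_notMem.1 h0).mono fun _ h => not_lt.1 h

lemma IsExpectile.toReal_measure_le_lt_one (he : IsExpectile P L α e) (hα1 : α < 1)
    (hL : Integrable L P) (hnc : ¬ ∃ c : ℝ, ∀ᵐ ω ∂P, L ω = c) :
    (P {ω | L ω ≤ e}).toReal < 1 := by
  have h1 : P {ω | L ω ≤ e} ≠ 1 := fun h1 => hnc ⟨e, he.ae_eq_of_ae_le hα1 hL <|
    (mem_ae_iff_prob_eq_one₀ (nullMeasurableSet_le hL.aemeasurable aemeasurable_const)).2 h1⟩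
  exact ENNReal.toReal_lt_of_lt_ofReal (by simpa using lt_of_le_of_ne prob_le_one h1)

end Expectile

/-- for non-constant `L`, every `β*` in `[P[L < e_α(L)], P[L ≤ e_α(L)]]`
lies strictly between `0` and `1` and
`e_α(L) = (1 - (1-α)/(α+(1-2α)β*))·ES_{β*}(L) + ((1-α)/(α+(1-2α)β*))·E[L]`. -/
theorem expectile_eq_expectedShortfall {Ω : Type*} [MeasurableSpace Ω] (P : Measure Ω)
    [IsProbabilityMeasure P] (L : Ω → ℝ) (hL : Integrable L P)
    (hnc : ¬ ∃ c : ℝ, ∀ᵐ ω ∂P, L ω = c)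
    (α : ℝ) (hα : 1 / 2 ≤ α) (hα1 : α < 1) (e : ℝ) (he : IsExpectile P L α e)
    (β : ℝ) (hβl : (P {ω | L ω < e}).toReal ≤ β) (hβu : β ≤ (P {ω | L ω ≤ e}).toReal) :
    0 < β ∧ β < 1 ∧
      e = (1 - (1 - α) / (α + (1 - 2 * α) * β)) * ES P L β +
        ((1 - α) / (α + (1 - 2 * α) * β)) * ∫ ω, L ω ∂P := by
  have hα0 : 0 < α := by linarith
  have hβ0 : 0 < β := (he.toReal_measure_lt_pos hα0 hL hnc).trans_le hβl
  have hβ1 : β < 1 := hβu.trans_lt (he.toReal_measure_le_lt_one hα1 hL hnc)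
  refine ⟨hβ0, hβ1, ?_⟩
  have hES : (1 - β) * ES P L β = ∫ ω, max (L ω - e) 0 ∂P + (1 - β) * e := by
    rw [ES, intervalIntegral_leftQuantile_eq hL hβl hβu hβ1.le, mul_inv_cancel_left₀ (by linarith)]
  have hmean := integral_max_sub_sub_integral_max_sub hL e
  have key : e * (α + (1 - 2 * α) * β) =
      (α + (1 - 2 * α) * β - (1 - α)) * ES P L β + (1 - α) * ∫ ω, L ω ∂P := by
    unfold IsExpectile at he
    linear_combination (1 - 2 * α) * hES + (1 - α) * hmean - he
  have hDinv : (α + (1 - 2 * α) * β) * (α + (1 - 2 * α) * β)⁻¹ = 1 :=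
    mul_inv_cancel₀ (by nlinarith)
  linear_combination (α + (1 - 2 * α) * β)⁻¹ * key + (ES P L β - e) * hDinv
end
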